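/- arXiv:1408.2675 — 2 statements merged into one kernel-verified Lean document; each statement's English description precedes it below -/
import Mathlib

section
/- Let n ≥ 1 and let f : ℝⁿ → ℝ be continuously differentiable with gradient g. Fix s ∈ (0,1], ρ ∈ (0,1), σ ∈ (0,1/2), an integer N ≥ 1, and weights η_k ∈ [0,1). Let x_{k+1} = x_k + α_k d_k, where α_k = s ρ^{j_k} and j_k is the smallest j ∈ ℕ with f(x_k + s ρ^j d_k) ≤ T_k + σ s ρ^j ⟨g(x_k), d_k⟩; here f_k = f(x_k), f_{l(k)} = max_{0≤j≤min(k,N)} f_{k−j}, T̄_0 = f_0, T̄_k = (1−η_{k−1}) f_k + η_{k−1} T̄_{k−1} for 1 ≤ k ≤ N−1, T̄_k = Σ_{j=0}^{N−1}(η_{k−1}⋯η_{k−j})(1−η_{k−j−1}) f_{k−j} + (η_{k−1}⋯η_{k−N}) f_{k−N} for k ≥ N, and T_k = f_{l(k)} for k ≤ N−1, T_k = max{T̄_k, f_k} for k ≥ N. Assume (H1) the level set L(x_0) = {x ∈ ℝⁿ : f(x) ≤ f(x_0)} is bounded; (H2) there exist an open convex set C ⊇ L(x_0) and L > 0 with ‖g(x)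 − g(y)‖ ≤ L‖x − y‖ for all x, y ∈ C; and (H3) there exist 0 < c₁ < 1 < c₂ with ⟨g(x_k), d_k⟩ ≤ −c₁‖g(x_k)‖² and ‖d_k‖ ≤ c₂‖g(x_k)‖ for all k. Then lim_{k→∞} ‖g(x_k)‖ = 0. -/
/-!
The reference value `T k` always lies between `f (x k)` and the lagged maximum
`f_{l(k)} = max_{j ≤ min k N} f (x (k - j))` (for `k ≥ N`, `T̄ k` is a convex combination of
those values), so the Armijo condition gives `f (x (k+1)) + σ α_k q_k ≤ f_{l(k)}` with
`q_k = -⟪g (x k), d k⟫ ≥ c₁ ‖g (x k)‖²`. Hence `f_{l(k)}` is nonincreasing, the iterates stay in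
the compact level set, and the Grippo–Lampariello–Lucidi argument (walk back from the index
`l(k)` one step at a time, using uniform continuity of `f`) shows `α_k q_k → 0`. Finally, either
the full step `s` is accepted, or the trial step `α_k / ρ` was rejected, and then the descent
lemma for the Lipschitz gradient gives `(1 - σ) q_k ≤ L/(2ρ) α_k ‖d k‖²`. Either way `q_k` is at
most a constant times `α_k q_k`, so `‖g (x k)‖ → 0`.
-/

open Set Filter Topology Finset
open scoped InnerProductSpace

section LaggedMax

variable {α : Type*} [LinearOrder α] (F : ℕ → α) (N : ℕ)

def laggedMax (k : ℕ) : α :=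
  (range (min k N + 1)).sup' nonempty_range_add_one fun j => F (k - j)

variable {F N}

theorem apply_sub_le_laggedMax {k j : ℕ} (hj : j ≤ min k N) : F (k - j) ≤ laggedMax F N k :=
  le_sup' (fun j => F (k - j)) (mem_range.2 (Nat.lt_succ_of_le hj))

variable (F N) in
theorem le_laggedMax (k : ℕ) : F k ≤ laggedMax F N k :=
  apply_sub_le_laggedMax (Nat.zero_le _)

variable (F N) in
theorem exists_laggedMax_eq (k : ℕ) : ∃ j ≤ min k N, laggedMax F N k = F (k - j) := by
  obtain ⟨j, hj, hmax⟩ := exists_mem_eq_sup' nonempty_range_add_one fun j => F (k - j)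
  exact ⟨j, Nat.le_of_lt_succ (mem_range.1 hj), hmax⟩

theorem antitone_laggedMax (h : ∀ k, F (k + 1) ≤ laggedMax F N k) : Antitone (laggedMax F N) :=
  antitone_nat_of_succ_le fun k => sup'_le _ _ fun j hj => by
    rcases j with _ | j
    · exact h k
    · rw [Nat.add_sub_add_right]
      exact apply_sub_le_laggedMax (by simp at hj; omega)

theorem apply_le_apply_zero_of_le_laggedMax (h : ∀ k, F (k + 1) ≤ laggedMax F N k) (k : ℕ) :
    F k ≤ F 0 :=
  calc F k ≤ laggedMax F N k := le_laggedMax F N k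
    _ ≤ laggedMax F N 0 := antitone_laggedMax h (Nat.zero_le k)
    _ = F 0 := by simp [laggedMax]

end LaggedMax

theorem sum_prod_mul_one_sub_add_prod {R : Type*} [CommRing R] (a : ℕ → R) (N : ℕ) :
    ∑ j ∈ range N, (∏ i ∈ range j, a i) * (1 - a j) + ∏ i ∈ range N, a i = 1 := by
  induction N with
  | zero => simp
  | succ N ih => rw [sum_range_succ, prod_range_succ]; linear_combination ih

theorem sum_prod_mul_one_sub_add_prod_le {a u : ℕ → ℝ} {N : ℕ} {M : ℝ} (ha₀ : ∀ i, 0 ≤ a i)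
    (ha₁ : ∀ i, a i ≤ 1) (hu : ∀ j ≤ N, u j ≤ M) :
    ∑ j ∈ range N, (∏ i ∈ range j, a i) * (1 - a j) * u j + (∏ i ∈ range N, a i) * u N ≤ M := by
  have hprod : ∀ j, 0 ≤ ∏ i ∈ range j, a i := fun j => prod_nonneg fun i _ => ha₀ i
  calc _ ≤ ∑ j ∈ range N, (∏ i ∈ range j, a i) * (1 - a j) * M + (∏ i ∈ range N, a i) * M := by
        refine add_le_add (sum_le_sum fun j hj => ?_)
          (mul_le_mul_of_nonneg_left (hu N le_rfl) (hprod N))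
        exact mul_le_mul_of_nonneg_left (hu j (mem_range.1 hj).le)
          (mul_nonneg (hprod j) (sub_nonneg.2 (ha₁ j)))
    _ = M := by rw [← sum_mul, ← add_mul, sum_prod_mul_one_sub_add_prod, one_mul]

theorem tendsto_of_forall_tendsto_apply_sub {X : Type*} [TopologicalSpace X] {u : ℕ → X}
    {a : X} {i : ℕ → ℕ} {N : ℕ} (hi : ∀ k, i k ≤ k) (hiN : ∀ k, k ≤ i k + N)
    (h : ∀ j ≤ N, Tendsto (fun k => u (i k - j)) atTop (𝓝 a)) : Tendsto u atTop (𝓝 a) := by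
  intro U hU
  obtain ⟨K, hK⟩ :=
    eventually_atTop.1 <| (Set.finite_Iic N).eventually_all.2 fun j hj => h j hj hU
  refine mem_atTop_sets.2 ⟨K, fun k hk => ?_⟩
  have hik := hK (k + N) (by omega) (i (k + N) - k) (by simp; have := hi (k + N); omega)
  simp only at hik
  rwa [Nat.sub_sub_self (by have := hiN (k + N); omega)] at hik

theorem tendsto_zero_of_sq_le_mul {ι : Type*} {l : Filter ι} {u v : ι → ℝ} {c : ℝ}
    (hu : ∀ i, 0 ≤ u i) (hv : Tendsto v l (𝓝 0)) (h : ∀ᶠ i in l, u i ^ 2 ≤ c * v i) :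
    Tendsto u l (𝓝 0) := by
  have hsq : Tendsto (fun i => u i ^ 2) l (𝓝 0) := by
    refine tendsto_of_tendsto_of_tendsto_of_le_of_le' tendsto_const_nhds ?_
      (Eventually.of_forall fun i => sq_nonneg (u i)) h
    simpa using hv.const_mul c
  simpa [Real.sqrt_sq (hu _)] using hsq.sqrt

theorem tendsto_zero_of_add_le_laggedMax {F e : ℕ → ℝ} {N : ℕ} (he : ∀ k, 0 ≤ e k)
    (hdec : ∀ k, F (k + 1) + e k ≤ laggedMax F N k) (hbdd : BddBelow (Set.range F))
    (hF : ∀ m : ℕ → ℕ, Tendsto (e ∘ m) atTop (𝓝 0) →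
      Tendsto (fun k => dist (F (m k + 1)) (F (m k))) atTop (𝓝 0)) :
    Tendsto e atTop (𝓝 0) := by
  have hFM : ∀ k, F (k + 1) ≤ laggedMax F N k :=
    fun k => (le_add_of_nonneg_right (he k)).trans (hdec k)
  obtain ⟨b, hb⟩ := hbdd
  have hM : Tendsto (laggedMax F N) atTop (𝓝 (⨅ k, laggedMax F N k)) :=
    tendsto_atTop_ciInf (antitone_laggedMax hFM)
      ⟨b, Set.forall_mem_range.2 fun k => (hb ⟨k, rfl⟩).trans (le_laggedMax F N k)⟩
  set F₀ := ⨅ k, laggedMax F N k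
  have he_comp : ∀ m : ℕ → ℕ, Tendsto m atTop atTop →
      Tendsto (fun k => F (m k + 1)) atTop (𝓝 F₀) → Tendsto (e ∘ m) atTop (𝓝 0) := by
    intro m hm hFm
    refine tendsto_of_tendsto_of_tendsto_of_le_of_le tendsto_const_nhds
      (by simpa using (hM.comp hm).sub hFm) (fun k => he (m k)) fun k => ?_
    simp only [Function.comp_apply]
    linarith [hdec (m k)]
  choose lag hlag hlagM using exists_laggedMax_eq F N
  -- Walk back from `k - lag k`: wherever `F (m k + 1) → F₀`, `he_comp` squeezes `e (m k)` to `0`,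
  -- and then `hF` gives `F (m k) → F₀` as well.
  have hback : ∀ j, Tendsto (fun k => F (k - lag k - j)) atTop (𝓝 F₀) := by
    intro j
    induction j with
    | zero => simpa [← hlagM] using hM
    | succ j ih =>
      have hm : Tendsto (fun k => k - lag k - (j + 1)) atTop atTop :=
        tendsto_atTop_mono (f := fun k => k - (N + j + 1))
          (fun k => by have := hlag k; omega) (tendsto_sub_atTop_nat (N + j + 1))
      have hsucc : Tendsto (fun k => F (k - lag k - (j + 1) + 1)) atTop (𝓝 F₀) :=
        ih.congr' <| (eventually_ge_atTop (N + j + 1)).mono fun k hk => by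
          have := hlag k
          congr 1
          omega
      exact hsucc.congr_dist (hF _ (he_comp _ hm hsucc))
  have hFlim : Tendsto F atTop (𝓝 F₀) :=
    tendsto_of_forall_tendsto_apply_sub (i := fun k => k - lag k) (N := N)
      (fun k => Nat.sub_le _ _) (fun k => by have := hlag k; omega) fun j _ => hback j
  exact he_comp id tendsto_id (hFlim.comp (tendsto_add_atTop_nat 1))

theorem tendsto_zero_of_add_le_laggedMax_of_isCompact {X : Type*} [PseudoMetricSpace X]
    {f : X → ℝ} {x : ℕ → X} {e : ℕ → ℝ} {N : ℕ} {c : ℝ} (hf : Continuous f)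
    (hK : IsCompact {y | f y ≤ f (x 0)}) (he : ∀ k, 0 ≤ e k)
    (hdec : ∀ k, f (x (k + 1)) + e k ≤ laggedMax (fun i => f (x i)) N k)
    (hstep : ∀ k, dist (x (k + 1)) (x k) ^ 2 ≤ c * e k) :
    Tendsto e atTop (𝓝 0) := by
  have hmem : ∀ k, x k ∈ {y | f y ≤ f (x 0)} := apply_le_apply_zero_of_le_laggedMax
    fun k => (le_add_of_nonneg_right (he k)).trans (hdec k)
  obtain ⟨z, -, hz⟩ := hK.exists_isMinOn ⟨x 0, le_rfl (a := f (x 0))⟩ hf.continuousOn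
  refine tendsto_zero_of_add_le_laggedMax he hdec
    ⟨f z, Set.forall_mem_range.2 fun k => hz (hmem k)⟩ fun m hm => ?_
  have hx : Tendsto (fun k => dist (x (m k + 1)) (x (m k))) atTop (𝓝 0) :=
    tendsto_zero_of_sq_le_mul (fun _ => dist_nonneg) hm (.of_forall fun k => hstep (m k))
  have hpair : Tendsto (fun k => (x (m k + 1), x (m k))) atTop
      (uniformity X ⊓ 𝓟 ({y | f y ≤ f (x 0)} ×ˢ {y | f y ≤ f (x 0)})) :=
    tendsto_inf.2 ⟨tendsto_uniformity_iff_dist_tendsto_zero.2 hx,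
      tendsto_principal.2 (Eventually.of_forall fun k => ⟨hmem _, hmem _⟩)⟩
  exact tendsto_uniformity_iff_dist_tendsto_zero.1 <|
    Tendsto.comp (hK.uniformContinuousOn_of_continuous hf.continuousOn) hpair

theorem mul_sq_norm_le_of_gradient_related {E : Type*} [NormedAddCommGroup E]
    [InnerProductSpace ℝ E] {v d : E} {c₁ c₂ : ℝ} (hc₁ : 0 < c₁)
    (hangle : ⟪v, d⟫_ℝ ≤ -c₁ * ‖v‖ ^ 2) (hnorm : ‖d‖ ≤ c₂ * ‖v‖) :
    c₁ * ‖d‖ ^ 2 ≤ c₂ ^ 2 * -⟪v, d⟫_ℝ :=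
  calc c₁ * ‖d‖ ^ 2 ≤ c₁ * (c₂ * ‖v‖) ^ 2 := by gcongr
    _ = c₂ ^ 2 * (c₁ * ‖v‖ ^ 2) := by ring
    _ ≤ c₂ ^ 2 * -⟪v, d⟫_ℝ := by gcongr; linarith

theorem sq_norm_smul_le_of_gradient_related {E : Type*} [NormedAddCommGroup E]
    [InnerProductSpace ℝ E] {v d : E} {a s c₁ c₂ : ℝ} (hc₁ : 0 < c₁) (ha₀ : 0 ≤ a) (has : a ≤ s)
    (hangle : ⟪v, d⟫_ℝ ≤ -c₁ * ‖v‖ ^ 2) (hnorm : ‖d‖ ≤ c₂ * ‖v‖) :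
    ‖a • d‖ ^ 2 ≤ s * c₂ ^ 2 / c₁ * (a * -⟪v, d⟫_ℝ) := by
  rw [norm_smul, Real.norm_of_nonneg ha₀, div_mul_eq_mul_div, le_div_iff₀ hc₁]
  calc (a * ‖d‖) ^ 2 * c₁ = a * a * (c₁ * ‖d‖ ^ 2) := by ring
    _ ≤ a * s * (c₂ ^ 2 * -⟪v, d⟫_ℝ) :=
        mul_le_mul (mul_le_mul_of_nonneg_left has ha₀)
          (mul_sq_norm_le_of_gradient_related hc₁ hangle hnorm) (by positivity)
          (mul_nonneg ha₀ (ha₀.trans has))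
    _ = s * c₂ ^ 2 * (a * -⟪v, d⟫_ℝ) := by ring

theorem tendsto_mul_neg_inner_of_le_laggedMax_add {E : Type*} [NormedAddCommGroup E]
    [InnerProductSpace ℝ E] {f : E → ℝ} {g : E → E} {x d : ℕ → E} {α : ℕ → ℝ} {N : ℕ}
    {s σ c₁ c₂ : ℝ} (hf : Continuous f) (hK : IsCompact {y | f y ≤ f (x 0)}) (hσ : 0 < σ)
    (hc₁ : 0 < c₁) (hα₀ : ∀ k, 0 ≤ α k) (hαs : ∀ k, α k ≤ s)
    (hdec : ∀ k,
      f (x (k + 1)) ≤ laggedMax (fun i => f (x i)) N k + σ * α k * ⟪g (x k), d k⟫_ℝ)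
    (hx : ∀ k, x (k + 1) = x k + α k • d k)
    (hdir : ∀ k, ⟪g (x k), d k⟫_ℝ ≤ -c₁ * ‖g (x k)‖ ^ 2 ∧ ‖d k‖ ≤ c₂ * ‖g (x k)‖) :
    Tendsto (fun k => α k * -⟪g (x k), d k⟫_ℝ) atTop (𝓝 0) := by
  have hq : ∀ k, 0 ≤ -⟪g (x k), d k⟫_ℝ := fun k =>
    (by positivity : 0 ≤ c₁ * ‖g (x k)‖ ^ 2).trans (by linarith [(hdir k).1])
  have he := tendsto_zero_of_add_le_laggedMax_of_isCompact
    (e := fun k => σ * (α k * -⟪g (x k), d k⟫_ℝ)) (c := s * c₂ ^ 2 / c₁ / σ) hf hK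
    (fun k => by positivity [hα₀ k, hq k]) (fun k => by linarith [hdec k]) fun k => by
      rw [hx, dist_comm, dist_self_add_right]
      refine (sq_norm_smul_le_of_gradient_related hc₁ (hα₀ k) (hαs k) (hdir k).1
        (hdir k).2).trans_eq ?_
      field_simp
  simpa [hσ.ne'] using he.const_mul σ⁻¹

section LineSearch

variable {E : Type*} [NormedAddCommGroup E] [InnerProductSpace ℝ E] [CompleteSpace E]
  {f : E → ℝ} {g : E → E} {C : Set E} {L : ℝ}

theorem le_add_inner_add_half_mul_sq (hg : ∀ y, HasGradientAt f (g y) y)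
    (hlip : ∀ a ∈ C, ∀ b ∈ C, ‖g a - g b‖ ≤ L * ‖a - b‖) {x y : E} (hxy : segment ℝ x y ⊆ C) :
    f y ≤ f x + ⟪g x, y - x⟫_ℝ + L / 2 * ‖y - x‖ ^ 2 := by
  set v := y - x
  have hmem : ∀ t ∈ Icc (0 : ℝ) 1, x + t • v ∈ C := fun t ht =>
    hxy (segment_eq_image' ℝ x y ▸ ⟨t, ht, rfl⟩)
  let φ : ℝ → ℝ := fun t => f (x + t • v) - t * ⟪g x, v⟫_ℝ - L / 2 * t ^ 2 * ‖v‖ ^ 2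
  have hφ : ∀ t, HasDerivAt φ (⟪g (x + t • v), v⟫_ℝ - ⟪g x, v⟫_ℝ - L * t * ‖v‖ ^ 2) t := by
    intro t
    have hline : HasDerivAt (fun t : ℝ => x + t • v) v t := by
      simpa using ((hasDerivAt_id t).smul_const v).const_add x
    have hf := (hg (x + t • v)).hasFDerivAt.comp_hasDerivAt t hline
    simp only [InnerProductSpace.toDual_apply_apply] at hf
    refine ((hf.sub ((hasDerivAt_id t).mul_const ⟪g x, v⟫_ℝ)).sub
      (((hasDerivAt_pow 2 t).const_mul (L / 2)).mul_const (‖v‖ ^ 2))).congr_deriv ?_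
    ring
  have hφ' : ∀ t ∈ interior (Icc (0 : ℝ) 1), deriv φ t ≤ 0 := by
    intro t ht
    rw [interior_Icc] at ht
    have hlipt := hlip _ (hmem t (Ioo_subset_Icc_self ht)) _ (hmem 0 (by simp))
    rw [zero_smul, add_zero, add_sub_cancel_left, norm_smul, Real.norm_of_nonneg ht.1.le]
      at hlipt
    rw [(hφ t).deriv, ← inner_sub_left]
    calc ⟪g (x + t • v) - g x, v⟫_ℝ - L * t * ‖v‖ ^ 2
        ≤ L * (t * ‖v‖) * ‖v‖ - L * t * ‖v‖ ^ 2 := by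
          gcongr
          exact (real_inner_le_norm _ _).trans
            (mul_le_mul_of_nonneg_right hlipt (norm_nonneg v))
      _ = 0 := by ring
  have hanti := antitoneOn_of_deriv_nonpos (convex_Icc 0 1)
    (fun t _ => (hφ t).continuousAt.continuousWithinAt)
    (fun t _ => (hφ t).differentiableAt.differentiableWithinAt) hφ'
  have h10 : φ 1 ≤ φ 0 := hanti (by simp) (by simp) zero_le_one
  simp only [φ, one_smul, zero_smul, add_zero, one_mul, zero_mul, one_pow, v, add_sub_cancel]
    at h10
  linarith

theorem one_sub_mul_neg_inner_lt_of_not_armijo (hg : ∀ y, HasGradientAt f (g y) y)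
    (hlip : ∀ a ∈ C, ∀ b ∈ C, ‖g a - g b‖ ≤ L * ‖a - b‖) {x d : E} {t σ T : ℝ} (ht : 0 < t)
    (hseg : segment ℝ x (x + t • d) ⊆ C) (hT : f x ≤ T)
    (hfail : T + σ * t * ⟪g x, d⟫_ℝ < f (x + t • d)) :
    (1 - σ) * -⟪g x, d⟫_ℝ < L / 2 * t * ‖d‖ ^ 2 := by
  have hdesc := le_add_inner_add_half_mul_sq hg hlip hseg
  rw [add_sub_cancel_left, inner_smul_right, norm_smul, Real.norm_of_nonneg ht.le] at hdesc
  have hscaled : t * ((1 - σ) * -⟪g x, d⟫_ℝ) < t * (L / 2 * t * ‖d‖ ^ 2) := by linarith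
  exact lt_of_mul_lt_mul_left hscaled ht.le

theorem eq_zero_or_lt_of_isLeast_armijo (hg : ∀ y, HasGradientAt f (g y) y)
    (hlip : ∀ a ∈ C, ∀ b ∈ C, ‖g a - g b‖ ≤ L * ‖a - b‖) {x d : E} {T s ρ σ : ℝ} {j : ℕ}
    (hs : 0 < s) (hρ : 0 < ρ) (hT : f x ≤ T)
    (hj : IsLeast {i : ℕ | f (x + (s * ρ ^ i) • d) ≤ T + σ * (s * ρ ^ i) * ⟪g x, d⟫_ℝ} j)
    (hseg : segment ℝ x (x + (s * ρ ^ j / ρ) • d) ⊆ C) :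
    j = 0 ∨ (1 - σ) * -⟪g x, d⟫_ℝ < L / (2 * ρ) * (s * ρ ^ j) * ‖d‖ ^ 2 := by
  rcases j with _ | j
  · exact Or.inl rfl
  have hprev : s * ρ ^ (j + 1) / ρ = s * ρ ^ j := by field_simp; ring
  rw [hprev] at hseg
  have hfail : T + σ * (s * ρ ^ j) * ⟪g x, d⟫_ℝ < f (x + (s * ρ ^ j) • d) :=
    lt_of_not_ge fun hj' => (hj.2 hj').not_gt (Nat.lt_succ_self j)
  refine Or.inr ((one_sub_mul_neg_inner_lt_of_not_armijo hg hlip (by positivity) hseg hT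
    hfail).trans_eq ?_)
  field_simp
  ring

theorem neg_inner_le_mul_of_isLeast_armijo (hg : ∀ y, HasGradientAt f (g y) y) (hL : 0 ≤ L)
    (hlip : ∀ a ∈ C, ∀ b ∈ C, ‖g a - g b‖ ≤ L * ‖a - b‖) {x d : E} {T s ρ σ c₁ c₂ : ℝ} {j : ℕ}
    (hs : 0 < s) (hρ : 0 < ρ) (hσ : σ < 1) (hc₁ : 0 < c₁) (hT : f x ≤ T)
    (hangle : ⟪g x, d⟫_ℝ ≤ -c₁ * ‖g x‖ ^ 2) (hnorm : ‖d‖ ≤ c₂ * ‖g x‖)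
    (hj : IsLeast {i : ℕ | f (x + (s * ρ ^ i) • d) ≤ T + σ * (s * ρ ^ i) * ⟪g x, d⟫_ℝ} j)
    (hseg : segment ℝ x (x + (s * ρ ^ j / ρ) • d) ⊆ C) :
    -⟪g x, d⟫_ℝ ≤
      max (1 / s) (L * c₂ ^ 2 / (2 * ρ * c₁ * (1 - σ))) * (s * ρ ^ j * -⟪g x, d⟫_ℝ) := by
  have hq : 0 ≤ -⟪g x, d⟫_ℝ := (by positivity : 0 ≤ c₁ * ‖g x‖ ^ 2).trans (by linarith)
  have hstep : 0 ≤ s * ρ ^ j * -⟪g x, d⟫_ℝ := by positivity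
  rcases eq_zero_or_lt_of_isLeast_armijo hg hlip hs hρ hT hj hseg with rfl | hlt
  · calc -⟪g x, d⟫_ℝ = 1 / s * (s * ρ ^ 0 * -⟪g x, d⟫_ℝ) := by field_simp
      _ ≤ _ := mul_le_mul_of_nonneg_right (le_max_left _ _) hstep
  have hd : ‖d‖ ^ 2 ≤ c₂ ^ 2 * -⟪g x, d⟫_ℝ / c₁ := by
    rw [le_div_iff₀ hc₁, mul_comm]
    exact mul_sq_norm_le_of_gradient_related hc₁ hangle hnorm
  have hlt' : (1 - σ) * -⟪g x, d⟫_ℝ <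
      (1 - σ) * (L * c₂ ^ 2 / (2 * ρ * c₁ * (1 - σ)) * (s * ρ ^ j * -⟪g x, d⟫_ℝ)) :=
    calc (1 - σ) * -⟪g x, d⟫_ℝ < L / (2 * ρ) * (s * ρ ^ j) * ‖d‖ ^ 2 := hlt
      _ ≤ L / (2 * ρ) * (s * ρ ^ j) * (c₂ ^ 2 * -⟪g x, d⟫_ℝ / c₁) := by gcongr
      _ = _ := by field_simp [sub_ne_zero.2 hσ.ne']
  exact (lt_of_mul_lt_mul_left hlt' (by linarith)).le.trans
    (mul_le_mul_of_nonneg_right (le_max_right _ _) hstep)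

theorem tendsto_norm_gradient_of_nonmonotone_armijo (hg : ∀ y, HasGradientAt f (g y) y)
    (hL : 0 ≤ L) (hlip : ∀ a ∈ C, ∀ b ∈ C, ‖g a - g b‖ ≤ L * ‖a - b‖) (hC : IsOpen C)
    {x d : ℕ → E} {T : ℕ → ℝ} {jk : ℕ → ℕ} {N : ℕ} {s ρ σ c₁ c₂ : ℝ}
    (hK : IsCompact {y | f y ≤ f (x 0)}) (hKC : {y | f y ≤ f (x 0)} ⊆ C)
    (hs : 0 < s) (hρ₀ : 0 < ρ) (hρ₁ : ρ ≤ 1) (hσ₀ : 0 < σ) (hσ₁ : σ < 1) (hc₁ : 0 < c₁)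
    (hT : ∀ k, f (x k) ≤ T k ∧ T k ≤ laggedMax (fun i => f (x i)) N k)
    (hjk : ∀ k, IsLeast {j : ℕ | f (x k + (s * ρ ^ j) • d k) ≤
      T k + σ * (s * ρ ^ j) * ⟪g (x k), d k⟫_ℝ} (jk k))
    (hx : ∀ k, x (k + 1) = x k + (s * ρ ^ jk k) • d k)
    (hdir : ∀ k, ⟪g (x k), d k⟫_ℝ ≤ -c₁ * ‖g (x k)‖ ^ 2 ∧ ‖d k‖ ≤ c₂ * ‖g (x k)‖) :
    Tendsto (fun k => ‖g (x k)‖) atTop (𝓝 0) := by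
  set α : ℕ → ℝ := fun k => s * ρ ^ jk k
  set q : ℕ → ℝ := fun k => -⟪g (x k), d k⟫_ℝ
  have hα₀ : ∀ k, 0 ≤ α k := fun k => by positivity
  have hαs : ∀ k, α k ≤ s := fun k => mul_le_of_le_one_right hs.le (pow_le_one₀ hρ₀.le hρ₁)
  have hgq : ∀ k, c₁ * ‖g (x k)‖ ^ 2 ≤ q k := fun k => by linarith [(hdir k).1]
  have hq : ∀ k, 0 ≤ q k := fun k => (by positivity : 0 ≤ c₁ * ‖g (x k)‖ ^ 2).trans (hgq k)
  have hdec : ∀ k,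
      f (x (k + 1)) ≤ laggedMax (fun i => f (x i)) N k + σ * α k * ⟪g (x k), d k⟫_ℝ :=
    fun k => by
      have harmijo := (hjk k).1
      rw [Set.mem_ofPred_eq, ← hx] at harmijo
      linarith [(hT k).2]
  have hαq : Tendsto (fun k => α k * q k) atTop (𝓝 0) :=
    tendsto_mul_neg_inner_of_le_laggedMax_add
      (continuous_iff_continuousAt.2 fun y => (hg y).continuousAt) hK hσ₀ hc₁ hα₀ hαs
      hdec hx hdir
  have hmem : ∀ k, x k ∈ {y | f y ≤ f (x 0)} :=
    apply_le_apply_zero_of_le_laggedMax (F := fun i => f (x i)) (N := N) fun k =>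
      (hdec k).trans <| add_le_of_nonpos_right <|
        mul_nonpos_of_nonneg_of_nonpos (by positivity) (neg_nonneg.1 (hq k))
  have htrial : Tendsto (fun k => ‖(α k / ρ) • d k‖) atTop (𝓝 0) := by
    have hαq' : Tendsto (fun k => α k / ρ * q k) atTop (𝓝 0) := by
      simpa only [zero_div, mul_div_right_comm] using hαq.div_const ρ
    refine tendsto_zero_of_sq_le_mul (c := s / ρ * c₂ ^ 2 / c₁) (fun _ => norm_nonneg _) hαq'
      (.of_forall fun k => ?_)
    exact sq_norm_smul_le_of_gradient_related hc₁ (by positivity)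
      (div_le_div_of_nonneg_right (hαs k) hρ₀.le) (hdir k).1 (hdir k).2
  obtain ⟨r, hr, hrC⟩ := hK.exists_thickening_subset_open hC hKC
  set K := max (1 / s) (L * c₂ ^ 2 / (2 * ρ * c₁ * (1 - σ)))
  -- Once the trial steps are shorter than `r`, the last rejected one stays in `C`.
  have hqe : ∀ᶠ k in atTop, q k ≤ K * (α k * q k) := by
    filter_upwards [htrial.eventually (gt_mem_nhds hr)] with k hk
    rw [← dist_self_add_right _ (x k)] at hk
    have hseg := (segment_subset_closedBall_left _ _).trans <| (Metric.closedBall_subset_ball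
      hk).trans <| (Metric.ball_subset_thickening (hmem k) r).trans hrC
    exact neg_inner_le_mul_of_isLeast_armijo hg hL hlip hs hρ₀ hσ₁ hc₁ (hT k).1 (hdir k).1
      (hdir k).2 (hjk k) hseg
  refine tendsto_zero_of_sq_le_mul (c := K / c₁) (fun k => norm_nonneg _) hαq
    (hqe.mono fun k hk => ?_)
  rw [div_mul_eq_mul_div, le_div_iff₀ hc₁]
  linarith [hgq k]

end LineSearch

theorem nmls_gradient_tendsto_zero_general (n : ℕ)
    (f : EuclideanSpace ℝ (Fin n) → ℝ)
    (g : EuclideanSpace ℝ (Fin n) → EuclideanSpace ℝ (Fin n))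
    (hg : ∀ y, HasGradientAt f (g y) y)
    (s ρ σ : ℝ) (hs : s ∈ Set.Ioc (0 : ℝ) 1) (hρ : ρ ∈ Set.Ioo (0 : ℝ) 1)
    (hσ : σ ∈ Set.Ioo (0 : ℝ) (1 / 2))
    (N : ℕ) (η : ℕ → ℝ) (hη : ∀ k, η k ∈ Set.Ico (0 : ℝ) 1)
    (x d : ℕ → EuclideanSpace ℝ (Fin n)) (α : ℕ → ℝ) (jk : ℕ → ℕ)
    (Tbar T fl : ℕ → ℝ)
    (hfl : ∀ k, fl k = (Finset.range (min k N + 1)).sup'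
      Finset.nonempty_range_add_one (fun j => f (x (k - j))))
    (hTsum : ∀ k, N ≤ k → Tbar k =
      (∑ j ∈ Finset.range N,
          (∏ i ∈ Finset.range j, η (k - 1 - i)) * (1 - η (k - j - 1)) * f (x (k - j)))
        + (∏ i ∈ Finset.range N, η (k - 1 - i)) * f (x (k - N)))
    (hTlt : ∀ k, k ≤ N - 1 → T k = fl k)
    (hTge : ∀ k, N ≤ k → T k = max (Tbar k) (f (x k)))
    (hjk : ∀ k, IsLeast {j : ℕ | f (x k + (s * ρ ^ j) • d k) ≤
      T k + σ * (s * ρ ^ j) * (inner ℝ (g (x k)) (d k) : ℝ)} (jk k))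
    (hα : ∀ k, α k = s * ρ ^ (jk k))
    (hx : ∀ k, x (k + 1) = x k + α k • d k)
    (H1 : Bornology.IsBounded {y : EuclideanSpace ℝ (Fin n) | f y ≤ f (x 0)})
    (H2 : ∃ C : Set (EuclideanSpace ℝ (Fin n)), IsOpen C ∧ Convex ℝ C ∧
      {y : EuclideanSpace ℝ (Fin n) | f y ≤ f (x 0)} ⊆ C ∧
      ∃ L > (0 : ℝ), ∀ a ∈ C, ∀ b ∈ C, ‖g a - g b‖ ≤ L * ‖a - b‖)
    (H3 : ∃ c₁ c₂ : ℝ, 0 < c₁ ∧ c₁ < 1 ∧ 1 < c₂ ∧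
      ∀ k, (inner ℝ (g (x k)) (d k) : ℝ) ≤ -c₁ * ‖g (x k)‖ ^ 2 ∧
        ‖d k‖ ≤ c₂ * ‖g (x k)‖) :
    Filter.Tendsto (fun k => ‖g (x k)‖) Filter.atTop (nhds 0) := by
  obtain ⟨C, hC, -, hKC, L, hL, hlip⟩ := H2
  obtain ⟨c₁, c₂, hc₁, -, -, hdir⟩ := H3
  have hfl' : fl = laggedMax (fun i => f (x i)) N := funext hfl
  have hTbar : ∀ k, N ≤ k → Tbar k ≤ laggedMax (fun i => f (x i)) N k := fun k hk => by
    rw [hTsum k hk]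
    simp_rw [Nat.sub_right_comm k _ 1]
    exact sum_prod_mul_one_sub_add_prod_le (u := fun j => f (x (k - j))) (fun i => (hη _).1)
      (fun i => (hη _).2.le) fun j hj =>
        apply_sub_le_laggedMax (F := fun i => f (x i)) (k := k) (by omega)
  have hT : ∀ k, f (x k) ≤ T k ∧ T k ≤ laggedMax (fun i => f (x i)) N k := fun k => by
    rcases lt_or_ge k N with hk | hk
    · rw [hTlt k (by omega), hfl']
      exact ⟨le_laggedMax (fun i => f (x i)) N k, le_rfl⟩
    · rw [hTge k hk]
      exact ⟨le_max_right _ _, max_le (hTbar k hk) (le_laggedMax (fun i => f (x i)) N k)⟩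
  have hf : Continuous f := continuous_iff_continuousAt.2 fun y => (hg y).continuousAt
  have hK : IsCompact {y | f y ≤ f (x 0)} :=
    Metric.isCompact_of_isClosed_isBounded (isClosed_le hf continuous_const) H1
  exact tendsto_norm_gradient_of_nonmonotone_armijo hg hL.le hlip hC hK hKC hs.1 hρ.1 hρ.2.le
    hσ.1 (by linarith [hσ.2]) hc₁ hT hjk (fun k => by rw [hx, hα]) hdir

/-- Theorem 1 (global convergence) for Algorithm NMLS with the nonmonotone
term (11): under (H1)–(H3), the gradients along the iterates of the nonmonotone
Armijo-type line search tend to zero. -/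
theorem nmls_gradient_tendsto_zero (n : ℕ) (hn : 1 ≤ n)
    (f : EuclideanSpace ℝ (Fin n) → ℝ)
    (g : EuclideanSpace ℝ (Fin n) → EuclideanSpace ℝ (Fin n))
    (hf : ContDiff ℝ 1 f) (hg : ∀ y, HasGradientAt f (g y) y)
    (s ρ σ : ℝ) (hs : s ∈ Set.Ioc (0 : ℝ) 1) (hρ : ρ ∈ Set.Ioo (0 : ℝ) 1)
    (hσ : σ ∈ Set.Ioo (0 : ℝ) (1 / 2))
    (N : ℕ) (hN : 1 ≤ N) (η : ℕ → ℝ) (hη : ∀ k, η k ∈ Set.Ico (0 : ℝ) 1)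
    (x d : ℕ → EuclideanSpace ℝ (Fin n)) (α : ℕ → ℝ) (jk : ℕ → ℕ)
    (Tbar T fl : ℕ → ℝ)
    (hfl : ∀ k, fl k = (Finset.range (min k N + 1)).sup'
      Finset.nonempty_range_add_one (fun j => f (x (k - j))))
    (hT0 : Tbar 0 = f (x 0))
    (hTrec : ∀ k, 1 ≤ k → k ≤ N - 1 →
      Tbar k = (1 - η (k - 1)) * f (x k) + η (k - 1) * Tbar (k - 1))
    (hTsum : ∀ k, N ≤ k → Tbar k =
      (∑ j ∈ Finset.range N,
          (∏ i ∈ Finset.range j, η (k - 1 - i)) * (1 - η (k - j - 1)) * f (x (k - j)))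
        + (∏ i ∈ Finset.range N, η (k - 1 - i)) * f (x (k - N)))
    (hTlt : ∀ k, k ≤ N - 1 → T k = fl k)
    (hTge : ∀ k, N ≤ k → T k = max (Tbar k) (f (x k)))
    (hjk : ∀ k, IsLeast {j : ℕ | f (x k + (s * ρ ^ j) • d k) ≤
      T k + σ * (s * ρ ^ j) * (inner ℝ (g (x k)) (d k) : ℝ)} (jk k))
    (hα : ∀ k, α k = s * ρ ^ (jk k))
    (hx : ∀ k, x (k + 1) = x k + α k • d k)
    (H1 : Bornology.IsBounded {y : EuclideanSpace ℝ (Fin n) | f y ≤ f (x 0)})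
    (H2 : ∃ C : Set (EuclideanSpace ℝ (Fin n)), IsOpen C ∧ Convex ℝ C ∧
      {y : EuclideanSpace ℝ (Fin n) | f y ≤ f (x 0)} ⊆ C ∧
      ∃ L > (0 : ℝ), ∀ a ∈ C, ∀ b ∈ C, ‖g a - g b‖ ≤ L * ‖a - b‖)
    (H3 : ∃ c₁ c₂ : ℝ, 0 < c₁ ∧ c₁ < 1 ∧ 1 < c₂ ∧
      ∀ k, (inner ℝ (g (x k)) (d k) : ℝ) ≤ -c₁ * ‖g (x k)‖ ^ 2 ∧
        ‖d k‖ ≤ c₂ * ‖g (x k)‖) :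
    Filter.Tendsto (fun k => ‖g (x k)‖) Filter.atTop (nhds 0) :=
  nmls_gradient_tendsto_zero_general n f g hg s ρ σ hs hρ hσ N η hη x d α jk Tbar T fl hfl hTsum
    hTlt hTge hjk hα hx H1 H2 H3
end

section
/- Let n ≥ 1 and let f : ℝⁿ → ℝ be continuously differentiable with gradient g. Fix s ∈ (0,1], ρ ∈ (0,1), σ ∈ (0,1/2), an integer N ≥ 1, and weights η_k ∈ [0,1). Let x_{k+1} = x_k + α_k d_k, where α_k = s ρ^{j_k} and j_k is the smallest j ∈ ℕ with f(x_k + s ρ^j d_k) ≤ T_k + σ s ρ^j ⟨g(x_k), d_k⟩; here f_k = f(x_k), f_{l(k)} = max_{0≤j≤min(k,N)} f_{k−j}, T̄_0 = f_0, T̄_k = (1−η_{k−1}) f_k + η_{k−1} T̄_{k−1} for 1 ≤ k ≤ N−1, T̄_k = Σ_{j=0}^{N−1}(η_{k−1}⋯η_{k−j})(1−η_{k−j−1}) f_{k−j} + (η_{k−1}⋯η_{k−N}) f_{k−N} for k ≥ N, and T_k = f_{l(k)} for k ≤ N−1, T_k = max{T̄_k, f_k} for k ≥ N. Assume (H1)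 the level set L(x_0) = {x ∈ ℝⁿ : f(x) ≤ f(x_0)} is bounded; (H2) there exist an open convex set C ⊇ L(x_0) and L > 0 with ‖g(x) − g(y)‖ ≤ L‖x − y‖ for all x, y ∈ C; and (H3) there exist 0 < c₁ < 1 < c₂ with ⟨g(x_k), d_k⟩ ≤ −c₁‖g(x_k)‖² and ‖d_k‖ ≤ c₂‖g(x_k)‖ for all k. Then every cluster point x* of the sequence {x_k} is a first-order stationary point of f, i.e., g(x*) = 0. -/
/-!
The reference value `T_k` is an average of the last `N + 1` function values, so
`f_k ≤ T_k ≤ f_{l(k)}`; the Armijo test then makes `f_{l(k)}` nonincreasing and keeps the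
iterates in the compact level set `L(x₀)`. On a closed `ε`-neighbourhood of `L(x₀)` inside `C`
the descent lemma applies, so backtracking stops at a step bounded below uniformly in `k`, and
`f_{k+1} ≤ f_{l(k)} - c ‖g_k‖²`. Every window of `N + 1` steps therefore contains an index
where `c ‖g_i‖²` is at most the (vanishing) decrease of `f_{l(k)}` over the window, and since
`‖g_k‖` grows at most geometrically along the iteration, `g(x_k) → 0`. Continuity of `g` at a
cluster point finishes the proof.
-/

open Filter Topology Set
open scoped RealInnerProductSpace

-- `f_{l(k)}` in the paper, for `F k = f (x k)`.
def windowMax {α : Type*} [LinearOrder α] (F : ℕ → α) (N k : ℕ) : α :=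
  (Finset.range (min k N + 1)).sup' Finset.nonempty_range_add_one fun j => F (k - j)

section WindowMax

variable {α : Type*} [LinearOrder α] {F : ℕ → α} {N : ℕ}

theorem le_windowMax {k j : ℕ} (hj : j ≤ min k N) : F (k - j) ≤ windowMax F N k :=
  Finset.le_sup' (fun j => F (k - j)) (Finset.mem_range.2 (Nat.lt_succ_of_le hj))

theorem self_le_windowMax (k : ℕ) : F k ≤ windowMax F N k :=
  le_windowMax (Nat.zero_le _)

theorem windowMax_zero : windowMax F N 0 = F 0 := by
  simp [windowMax]

theorem exists_windowMax_eq (k : ℕ) : ∃ j ≤ min k N, windowMax F N k = F (k - j) := by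
  obtain ⟨j, hj, hmax⟩ :=
    Finset.exists_mem_eq_sup' Finset.nonempty_range_add_one fun j => F (k - j)
  exact ⟨j, Nat.lt_succ_iff.1 (Finset.mem_range.1 hj), hmax⟩

theorem windowMax_succ_le {k : ℕ} (h : F (k + 1) ≤ windowMax F N k) :
    windowMax F N (k + 1) ≤ windowMax F N k := by
  obtain ⟨j, hj, hmax⟩ := exists_windowMax_eq (F := F) (N := N) (k + 1)
  rw [hmax]
  rcases j with _ | j
  · exact h
  · simpa using le_windowMax (F := F) (by omega : j ≤ min k N)

theorem antitone_windowMax (h : ∀ k, F (k + 1) ≤ windowMax F N k) : Antitone (windowMax F N) :=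
  antitone_nat_of_succ_le fun k => windowMax_succ_le (h k)

theorem apply_le_apply_zero_of_succ_le_windowMax (h : ∀ k, F (k + 1) ≤ windowMax F N k) (k : ℕ) :
    F k ≤ F 0 :=
  calc F k ≤ windowMax F N k := self_le_windowMax k
    _ ≤ windowMax F N 0 := antitone_windowMax h (Nat.zero_le k)
    _ = F 0 := windowMax_zero

end WindowMax

/-- Unrolling `T ← (1 - η) v + η T` gives an average of `v 0, …, v N`. -/
theorem nested_average_le {η v : ℕ → ℝ} {M : ℝ} {N : ℕ} (hη : ∀ i, η i ∈ Icc (0 : ℝ) 1)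
    (hv : ∀ j ≤ N, v j ≤ M) :
    ∑ j ∈ Finset.range N, (∏ i ∈ Finset.range j, η i) * (1 - η j) * v j
      + (∏ i ∈ Finset.range N, η i) * v N ≤ M := by
  set P : ℕ → ℝ := fun j => ∏ i ∈ Finset.range j, η i
  have hP : ∀ j, 0 ≤ P j := fun j => Finset.prod_nonneg fun i _ => (hη i).1
  calc ∑ j ∈ Finset.range N, P j * (1 - η j) * v j + P N * v N
      ≤ ∑ j ∈ Finset.range N, P j * (1 - η j) * M + P N * M := by
        gcongr with j hj
        · exact mul_nonneg (hP j) (sub_nonneg.2 (hη j).2)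
        · exact hv j (Finset.mem_range.1 hj).le
        · exact hP N
        · exact hv N le_rfl
    _ = ∑ j ∈ Finset.range N, (P j - P (j + 1)) * M + P N * M := by
        simp only [P, Finset.prod_range_succ, mul_one_sub]
    _ = M := by
        rw [← Finset.sum_mul, Finset.sum_range_sub' P N, ← add_mul, sub_add_cancel]
        simp [P]

theorem nonmonotone_reference_bounds {F η Tbar T : ℕ → ℝ} {N : ℕ}
    (hη : ∀ k, η k ∈ Ico (0 : ℝ) 1)
    (hTsum : ∀ k, N ≤ k → Tbar k =
      (∑ j ∈ Finset.range N,
          (∏ i ∈ Finset.range j, η (k - 1 - i)) * (1 - η (k - j - 1)) * F (k - j))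
        + (∏ i ∈ Finset.range N, η (k - 1 - i)) * F (k - N))
    (hTlt : ∀ k, k ≤ N - 1 → T k = windowMax F N k)
    (hTge : ∀ k, N ≤ k → T k = max (Tbar k) (F k)) (k : ℕ) :
    F k ≤ T k ∧ T k ≤ windowMax F N k := by
  rcases lt_or_ge k N with hk | hk
  · rw [hTlt k (by omega)]
    exact ⟨self_le_windowMax k, le_rfl⟩
  · rw [hTge k hk]
    refine ⟨le_max_right _ _, max_le ?_ (self_le_windowMax k)⟩
    have hidx : ∀ j, k - j - 1 = k - 1 - j := fun j => by omega
    simp only [hTsum k hk, hidx]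
    exact nested_average_le (v := fun j => F (k - j)) (fun i => Ico_subset_Icc_self (hη _))
      fun j hj => le_windowMax (by omega)

theorem exists_mul_le_windowMax_sub {F v : ℕ → ℝ} {c : ℝ} {N : ℕ}
    (hdec : ∀ k, F (k + 1) ≤ windowMax F N k - c * v k) (hanti : Antitone (windowMax F N))
    (k : ℕ) :
    ∃ i, k ≤ i ∧ i ≤ k + N ∧ c * v i ≤ windowMax F N k - windowMax F N (k + N + 1) := by
  obtain ⟨j, hj, hmax⟩ := exists_windowMax_eq (F := F) (N := N) (k + N + 1)
  refine ⟨k + N - j, by omega, by omega, ?_⟩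
  have hidx : k + N + 1 - j = k + N - j + 1 := by omega
  have hstep := hdec (k + N - j)
  have hmono := hanti (show k ≤ k + N - j by omega)
  rw [hmax, hidx]
  linarith

theorem tendsto_zero_of_le_windowMax_sub {F v : ℕ → ℝ} {c q : ℝ} {N : ℕ} (hc : 0 < c)
    (hq : 1 ≤ q) (hv : ∀ k, 0 ≤ v k) (hF : BddBelow (range F))
    (hdec : ∀ k, F (k + 1) ≤ windowMax F N k - c * v k) (hgrow : ∀ k, v (k + 1) ≤ q * v k) :
    Tendsto v atTop (𝓝 0) := by
  set W := windowMax F N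
  have hanti : Antitone W :=
    antitone_windowMax fun k => (hdec k).trans (sub_le_self _ (mul_nonneg hc.le (hv k)))
  have hWbdd : BddBelow (range W) := by
    obtain ⟨b, hb⟩ := hF
    exact ⟨b, by rintro _ ⟨k, rfl⟩; exact (hb ⟨k, rfl⟩).trans (self_le_windowMax k)⟩
  have hW := tendsto_atTop_ciInf hanti hWbdd
  have hgap : Tendsto (fun k => q ^ N / c * (W k - W (k + N + 1))) atTop (𝓝 0) := by
    simpa [add_assoc] using
      (hW.sub (hW.comp (tendsto_add_atTop_nat (N + 1)))).const_mul (q ^ N / c)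
  have hgeom : ∀ i m, i ≤ m → m ≤ i + N → v m ≤ q ^ N * v i := by
    intro i m him hmN
    obtain ⟨t, rfl⟩ := Nat.exists_eq_add_of_le him
    calc v (i + t) ≤ q ^ t * v i :=
          le_geom (u := fun t => v (i + t)) (by linarith) t fun k _ => hgrow (i + k)
      _ ≤ q ^ N * v i := by gcongr; exacts [hv i, by omega]
  have hbound : ∀ k, v (k + N) ≤ q ^ N / c * (W k - W (k + N + 1)) := by
    intro k
    obtain ⟨i, hki, hiN, hi⟩ := exists_mul_le_windowMax_sub hdec hanti k
    rw [div_mul_eq_mul_div, le_div_iff₀ hc]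
    calc v (k + N) * c ≤ q ^ N * v i * c := by
          gcongr; exact hgeom i (k + N) (by omega) (by omega)
      _ = q ^ N * (c * v i) := by ring
      _ ≤ q ^ N * (W k - W (k + N + 1)) := by gcongr
  exact (tendsto_add_atTop_iff_nat N).1 (squeeze_zero (fun k => hv _) hbound hgap)

theorem min_le_backtracking_step {P : ℝ → Prop} {s ρ B : ℝ} {j : ℕ} (hρ : 0 ≤ ρ)
    (hj : IsLeast {m : ℕ | P (s * ρ ^ m)} j) (hP : ∀ m : ℕ, s * ρ ^ m ≤ B → P (s * ρ ^ m)) :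
    min s (ρ * B) ≤ s * ρ ^ j := by
  rcases j with _ | m
  · simp
  · have hfail : B < s * ρ ^ m := by
      by_contra! hle
      exact absurd (hj.2 (hP m hle)) (by omega)
    calc min s (ρ * B) ≤ ρ * B := min_le_right _ _
      _ ≤ ρ * (s * ρ ^ m) := mul_le_mul_of_nonneg_left hfail.le hρ
      _ = s * ρ ^ (m + 1) := by ring

theorem eq_of_mapClusterPt_of_tendsto {ι X Y : Type*} [TopologicalSpace X] [TopologicalSpace Y]
    [T2Space Y] {l : Filter ι} {u : ι → X} {g : X → Y} {a : X} {b : Y}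
    (hu : MapClusterPt a l u) (hg : ContinuousAt g a) (hgu : Tendsto (g ∘ u) l (𝓝 b)) :
    g a = b :=
  eq_of_nhds_neBot ((hu.continuousAt_comp hg).clusterPt.mono hgu)

theorem continuousOn_of_norm_sub_le_mul {α β : Type*} [SeminormedAddCommGroup α]
    [SeminormedAddCommGroup β] {g : α → β} {C : Set α} {L : ℝ}
    (hLip : ∀ a ∈ C, ∀ b ∈ C, ‖g a - g b‖ ≤ L * ‖a - b‖) : ContinuousOn g C :=
  (LipschitzOnWith.of_dist_le' (by simpa only [dist_eq_norm] using hLip)).continuousOn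

section Armijo

variable {E : Type*} [NormedAddCommGroup E] [InnerProductSpace ℝ E]
  {f : E → ℝ} {g : E → E}

theorem descent_lemma [CompleteSpace E] {a b : E} {L : ℝ} (hL : 0 ≤ L)
    (hg : ∀ z ∈ segment ℝ a b, HasGradientAt f (g z) z)
    (hLip : ∀ z ∈ segment ℝ a b, ‖g z - g a‖ ≤ L * ‖z - a‖) :
    f b ≤ f a + ⟪g a, b - a⟫ + L * ‖b - a‖ ^ 2 := by
  have hmvt := (convex_segment a b).norm_image_sub_le_of_norm_hasFDerivWithin_le'
    (f' := fun z => InnerProductSpace.toDual ℝ E (g z))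
    (φ := InnerProductSpace.toDual ℝ E (g a)) (C := L * ‖b - a‖)
    (fun z hz => (hg z hz).hasFDerivAt.hasFDerivWithinAt)
    (fun z hz => by
      rw [← map_sub, LinearIsometryEquiv.norm_map]
      exact (hLip z hz).trans (mul_le_mul_of_nonneg_left (norm_sub_le_of_mem_segment hz) hL))
    (left_mem_segment ℝ a b) (right_mem_segment ℝ a b)
  rw [InnerProductSpace.toDual_apply_apply, Real.norm_eq_abs, abs_le] at hmvt
  nlinarith [hmvt.2]

def ArmijoCondition (f : E → ℝ) (g : E → E) (σ : ℝ) (x d : E) (T β : ℝ) : Prop :=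
  f (x + β • d) ≤ T + σ * β * ⟪g x, d⟫

theorem armijoCondition_of_le [CompleteSpace E] {σ c₁ c₂ L T β : ℝ} {x d : E} (hσ : σ ≤ 1)
    (hL : 0 ≤ L) (hβ : 0 ≤ β) (hg : ∀ z ∈ segment ℝ x (x + β • d), HasGradientAt f (g z) z)
    (hLip : ∀ z ∈ segment ℝ x (x + β • d), ‖g z - g x‖ ≤ L * ‖z - x‖)
    (hT : f x ≤ T) (hdir : ⟪g x, d⟫ ≤ -c₁ * ‖g x‖ ^ 2) (hd : ‖d‖ ≤ c₂ * ‖g x‖)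
    (hsmall : L * c₂ ^ 2 * β ≤ (1 - σ) * c₁) :
    ArmijoCondition f g σ x d T β := by
  have hdesc := descent_lemma hL hg hLip
  rw [add_sub_cancel_left, real_inner_smul_right, norm_smul, Real.norm_eq_abs, abs_of_nonneg hβ,
    mul_pow] at hdesc
  have hd2 : ‖d‖ ^ 2 ≤ c₂ ^ 2 * ‖g x‖ ^ 2 := by
    rw [← mul_pow]; exact pow_le_pow_left₀ (norm_nonneg d) hd 2
  have hquad : L * (β ^ 2 * ‖d‖ ^ 2) ≤ (1 - σ) * c₁ * β * ‖g x‖ ^ 2 :=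
    calc L * (β ^ 2 * ‖d‖ ^ 2) ≤ L * (β ^ 2 * (c₂ ^ 2 * ‖g x‖ ^ 2)) := by gcongr
      _ = (L * c₂ ^ 2 * β) * β * ‖g x‖ ^ 2 := by ring
      _ ≤ (1 - σ) * c₁ * β * ‖g x‖ ^ 2 := by gcongr
  have hlin : (1 - σ) * (β * ⟪g x, d⟫) ≤ -((1 - σ) * c₁ * β * ‖g x‖ ^ 2) := by
    have := mul_le_mul_of_nonneg_left hdir (mul_nonneg (sub_nonneg.2 hσ) hβ)
    linarith
  unfold ArmijoCondition
  linarith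

theorem le_sub_of_armijoCondition {σ c₁ T α a : ℝ} {x d : E}
    (h : ArmijoCondition f g σ x d T α) (hσ : 0 ≤ σ) (hc₁ : 0 ≤ c₁) (ha : 0 ≤ a) (haα : a ≤ α)
    (hdir : ⟪g x, d⟫ ≤ -c₁ * ‖g x‖ ^ 2) :
    f (x + α • d) ≤ T - σ * a * c₁ * ‖g x‖ ^ 2 := by
  have hip : ⟪g x, d⟫ ≤ 0 := hdir.trans (by nlinarith [sq_nonneg ‖g x‖])
  have h1 : σ * α * ⟪g x, d⟫ ≤ σ * a * ⟪g x, d⟫ :=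
    mul_le_mul_of_nonpos_right (mul_le_mul_of_nonneg_left haα hσ) hip
  have h2 : σ * a * ⟪g x, d⟫ ≤ σ * a * (-c₁ * ‖g x‖ ^ 2) :=
    mul_le_mul_of_nonneg_left hdir (mul_nonneg hσ ha)
  unfold ArmijoCondition at h
  linarith

theorem armijo_iterate_le_initial {x d : ℕ → E} {T : ℕ → ℝ} {j : ℕ → ℕ} {N : ℕ} {s ρ σ c₁ : ℝ}
    (hσ : 0 ≤ σ) (hc₁ : 0 ≤ c₁) (hs : 0 ≤ s) (hρ : 0 ≤ ρ)
    (hdir : ∀ k, ⟪g (x k), d k⟫ ≤ -c₁ * ‖g (x k)‖ ^ 2)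
    (hTW : ∀ k, T k ≤ windowMax (fun k => f (x k)) N k)
    (hj : ∀ k, IsLeast {m : ℕ | ArmijoCondition f g σ (x k) (d k) (T k) (s * ρ ^ m)} (j k))
    (hx : ∀ k, x (k + 1) = x k + (s * ρ ^ j k) • d k) (k : ℕ) :
    f (x k) ≤ f (x 0) := by
  refine apply_le_apply_zero_of_succ_le_windowMax (F := fun k => f (x k)) (N := N) (fun k => ?_) k
  have := le_sub_of_armijoCondition (hj k).1 hσ hc₁ le_rfl (by positivity) (hdir k)
  rw [hx]
  linarith [hTW k]

theorem exists_pos_le_armijo_step [CompleteSpace E] {x d : ℕ → E} {T : ℕ → ℝ} {j : ℕ → ℕ}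
    {C : Set E} {s ρ σ c₁ c₂ L ε D : ℝ} (hs : 0 < s) (hρ : 0 < ρ) (hσ : σ < 1) (hc₁ : 0 < c₁)
    (hc₂ : 0 < c₂) (hL : 0 < L) (hε : 0 < ε) (hD : 0 < D)
    (hg : ∀ y, HasGradientAt f (g y) y) (hLip : ∀ a ∈ C, ∀ b ∈ C, ‖g a - g b‖ ≤ L * ‖a - b‖)
    (hball : ∀ k, Metric.closedBall (x k) ε ⊆ C) (hT : ∀ k, f (x k) ≤ T k)
    (hdir : ∀ k, ⟪g (x k), d k⟫ ≤ -c₁ * ‖g (x k)‖ ^ 2) (hd : ∀ k, ‖d k‖ ≤ c₂ * ‖g (x k)‖)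
    (hdD : ∀ k, ‖d k‖ ≤ D)
    (hj : ∀ k, IsLeast {m : ℕ | ArmijoCondition f g σ (x k) (d k) (T k) (s * ρ ^ m)} (j k)) :
    ∃ a > 0, ∀ k, a ≤ s * ρ ^ j k := by
  -- A trial step `β ≤ ε / D` keeps the segment `[x k, x k + β d k]` inside `C`, where the descent
  -- lemma shows that `β ≤ (1 - σ) c₁ / (L c₂²)` passes the test.
  set B := min (ε / D) ((1 - σ) * c₁ / (L * c₂ ^ 2))
  have hB : 0 < B := lt_min (by positivity) (div_pos (by nlinarith) (by positivity))
  refine ⟨min s (ρ * B), lt_min hs (by positivity),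
    fun k => min_le_backtracking_step hρ.le (hj k) fun m hm => ?_⟩
  have hβ : 0 ≤ s * ρ ^ m := by positivity
  have hseg : segment ℝ (x k) (x k + (s * ρ ^ m) • d k) ⊆ C := by
    refine (segment_subset_closedBall_left _ _).trans
      ((Metric.closedBall_subset_closedBall ?_).trans (hball k))
    rw [dist_self_add_right, norm_smul, Real.norm_of_nonneg hβ]
    calc s * ρ ^ m * ‖d k‖ ≤ ε / D * D :=
          mul_le_mul (hm.trans (min_le_left _ _)) (hdD k) (norm_nonneg _) (by positivity)
      _ = ε := div_mul_cancel₀ ε hD.ne'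
  refine armijoCondition_of_le hσ.le hL.le hβ (fun z _ => hg z)
    (fun z hz => hLip _ (hseg hz) _ (hseg (left_mem_segment ℝ _ _))) (hT k) (hdir k) (hd k) ?_
  rw [← le_div_iff₀' (by positivity)]
  exact hm.trans (min_le_right _ _)

theorem norm_apply_add_smul_le {x d : E} {α s c₂ L : ℝ} (hα : 0 ≤ α) (hαs : α ≤ s) (hL : 0 ≤ L)
    (hd : ‖d‖ ≤ c₂ * ‖g x‖) (hLip : ‖g (x + α • d) - g x‖ ≤ L * ‖(x + α • d) - x‖) :
    ‖g (x + α • d)‖ ≤ (1 + L * s * c₂) * ‖g x‖ := by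
  rw [add_sub_cancel_left, norm_smul, Real.norm_of_nonneg hα] at hLip
  have hstep : α * ‖d‖ ≤ s * (c₂ * ‖g x‖) := mul_le_mul hαs hd (norm_nonneg d) (hα.trans hαs)
  calc ‖g (x + α • d)‖ ≤ ‖g x‖ + ‖g (x + α • d) - g x‖ := norm_le_insert' _ _
    _ ≤ ‖g x‖ + L * (s * (c₂ * ‖g x‖)) := by gcongr; exact hLip.trans (by gcongr)
    _ = (1 + L * s * c₂) * ‖g x‖ := by ring

theorem tendsto_gradient_armijo_iterates [ProperSpace E] {x d : ℕ → E} {T : ℕ → ℝ}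
    {j : ℕ → ℕ} {N : ℕ} {C : Set E} {s ρ σ c₁ c₂ L : ℝ} (hg : ∀ y, HasGradientAt f (g y) y)
    (hs : 0 < s) (hρ₀ : 0 < ρ) (hρ₁ : ρ ≤ 1) (hσ₀ : 0 < σ) (hσ₁ : σ < 1) (hc₁ : 0 < c₁)
    (hc₂ : 0 < c₂) (hL : 0 < L) (hbdd : Bornology.IsBounded {y | f y ≤ f (x 0)})
    (hC : IsOpen C) (hSC : {y | f y ≤ f (x 0)} ⊆ C)
    (hLip : ∀ a ∈ C, ∀ b ∈ C, ‖g a - g b‖ ≤ L * ‖a - b‖)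
    (hdir : ∀ k, ⟪g (x k), d k⟫ ≤ -c₁ * ‖g (x k)‖ ^ 2) (hd : ∀ k, ‖d k‖ ≤ c₂ * ‖g (x k)‖)
    (hT : ∀ k, f (x k) ≤ T k) (hTW : ∀ k, T k ≤ windowMax (fun k => f (x k)) N k)
    (hj : ∀ k, IsLeast {m : ℕ | ArmijoCondition f g σ (x k) (d k) (T k) (s * ρ ^ m)} (j k))
    (hx : ∀ k, x (k + 1) = x k + (s * ρ ^ j k) • d k) :
    Tendsto (fun k => g (x k)) atTop (𝓝 0) := by
  set S := {y | f y ≤ f (x 0)}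
  have hxS : ∀ k, x k ∈ S :=
    armijo_iterate_le_initial hσ₀.le hc₁.le hs.le hρ₀.le hdir hTW hj hx
  have hf : Continuous f := Differentiable.continuous fun y => (hg y).differentiableAt
  have hS : IsCompact S :=
    Metric.isCompact_of_isClosed_isBounded (isClosed_le hf continuous_const) hbdd
  have hgC : ContinuousOn g C := continuousOn_of_norm_sub_le_mul hLip
  obtain ⟨ε, hε, hεC⟩ := hS.exists_cthickening_subset_open hC hSC
  obtain ⟨G, hG, hGS⟩ :=
    (hS.image_of_continuousOn (hgC.mono hSC)).isBounded.exists_pos_norm_le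
  obtain ⟨a, ha, hstep⟩ := exists_pos_le_armijo_step (D := c₂ * G) hs hρ₀ hσ₁ hc₁ hc₂ hL hε
    (by positivity) hg hLip (fun k => (Metric.closedBall_subset_cthickening (hxS k) ε).trans hεC)
    hT hdir hd (fun k => (hd k).trans (by gcongr; exact hGS _ (mem_image_of_mem g (hxS k)))) hj
  have hsq : Tendsto (fun k => ‖g (x k)‖ ^ 2) atTop (𝓝 0) := by
    refine tendsto_zero_of_le_windowMax_sub (F := fun k => f (x k)) (N := N)
      (c := σ * a * c₁) (q := (1 + L * s * c₂) ^ 2) (by positivity)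
      (one_le_pow₀ (le_add_of_nonneg_right (by positivity))) (fun k => by positivity)
      ((hS.bddBelow_image hf.continuousOn).mono
        (range_subset_iff.2 fun k => mem_image_of_mem f (hxS k)))
      (fun k => ?_) (fun k => ?_)
    · rw [hx]
      linarith [le_sub_of_armijoCondition (hj k).1 hσ₀.le hc₁.le ha.le (hstep k) (hdir k), hTW k]
    · rw [hx, ← mul_pow]
      refine pow_le_pow_left₀ (norm_nonneg _) (norm_apply_add_smul_le (by positivity)
        (mul_le_of_le_one_right hs.le (pow_le_one₀ hρ₀.le hρ₁)) hL.le (hd k)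
        (hLip _ (hSC (hx k ▸ hxS (k + 1))) _ (hSC (hxS k)))) 2
  rw [tendsto_zero_iff_norm_tendsto_zero]
  simpa [Real.sqrt_sq (norm_nonneg _)] using hsq.sqrt

end Armijo

theorem nmls_cluster_points_stationary_general (n : ℕ)
    (f : EuclideanSpace ℝ (Fin n) → ℝ)
    (g : EuclideanSpace ℝ (Fin n) → EuclideanSpace ℝ (Fin n))
    (hg : ∀ y, HasGradientAt f (g y) y)
    (s ρ σ : ℝ) (hs : s ∈ Set.Ioc (0 : ℝ) 1) (hρ : ρ ∈ Set.Ioo (0 : ℝ) 1)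
    (hσ : σ ∈ Set.Ioo (0 : ℝ) (1 / 2))
    (N : ℕ) (η : ℕ → ℝ) (hη : ∀ k, η k ∈ Set.Ico (0 : ℝ) 1)
    (x d : ℕ → EuclideanSpace ℝ (Fin n)) (α : ℕ → ℝ) (jk : ℕ → ℕ)
    (Tbar T fl : ℕ → ℝ)
    (hfl : ∀ k, fl k = (Finset.range (min k N + 1)).sup'
      Finset.nonempty_range_add_one (fun j => f (x (k - j))))
    (hTsum : ∀ k, N ≤ k → Tbar k =
      (∑ j ∈ Finset.range N,
          (∏ i ∈ Finset.range j, η (k - 1 - i)) * (1 - η (k - j - 1)) * f (x (k - j)))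
        + (∏ i ∈ Finset.range N, η (k - 1 - i)) * f (x (k - N)))
    (hTlt : ∀ k, k ≤ N - 1 → T k = fl k)
    (hTge : ∀ k, N ≤ k → T k = max (Tbar k) (f (x k)))
    (hjk : ∀ k, IsLeast {j : ℕ | f (x k + (s * ρ ^ j) • d k) ≤
      T k + σ * (s * ρ ^ j) * (inner ℝ (g (x k)) (d k) : ℝ)} (jk k))
    (hα : ∀ k, α k = s * ρ ^ (jk k))
    (hx : ∀ k, x (k + 1) = x k + α k • d k)
    (H1 : Bornology.IsBounded {y : EuclideanSpace ℝ (Fin n) | f y ≤ f (x 0)})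
    (H2 : ∃ C : Set (EuclideanSpace ℝ (Fin n)), IsOpen C ∧ Convex ℝ C ∧
      {y : EuclideanSpace ℝ (Fin n) | f y ≤ f (x 0)} ⊆ C ∧
      ∃ L > (0 : ℝ), ∀ a ∈ C, ∀ b ∈ C, ‖g a - g b‖ ≤ L * ‖a - b‖)
    (H3 : ∃ c₁ c₂ : ℝ, 0 < c₁ ∧ c₁ < 1 ∧ 1 < c₂ ∧
      ∀ k, (inner ℝ (g (x k)) (d k) : ℝ) ≤ -c₁ * ‖g (x k)‖ ^ 2 ∧
        ‖d k‖ ≤ c₂ * ‖g (x k)‖) :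
    ∀ xstar : EuclideanSpace ℝ (Fin n),
      MapClusterPt xstar Filter.atTop x → g xstar = 0 := by
  intro xstar hclust
  obtain ⟨C, hC, -, hSC, L, hL, hLip⟩ := H2
  obtain ⟨c₁, c₂, hc₁, -, hc₂, hc⟩ := H3
  obtain rfl : fl = windowMax (fun k => f (x k)) N := funext hfl
  have hT := nonmonotone_reference_bounds hη hTsum hTlt hTge
  have hx' : ∀ k, x (k + 1) = x k + (s * ρ ^ jk k) • d k := fun k => hα k ▸ hx k
  have hσ₁ : σ < 1 := hσ.2.trans (by norm_num)
  have hgx := tendsto_gradient_armijo_iterates hg hs.1 hρ.1 hρ.2.le hσ.1 hσ₁ hc₁ (by linarith)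
    hL H1 hC hSC hLip (fun k => (hc k).1) (fun k => (hc k).2) (fun k => (hT k).1)
    (fun k => (hT k).2) hjk hx'
  have hf : Continuous f := Differentiable.continuous fun y => (hg y).differentiableAt
  have hxstar : f xstar ≤ f (x 0) :=
    (isClosed_le hf continuous_const).mem_of_mapClusterPt hclust (Eventually.of_forall
      (armijo_iterate_le_initial hσ.1.le hc₁.le hs.1.le hρ.1.le (fun k => (hc k).1)
        (fun k => (hT k).2) hjk hx'))
  exact eq_of_mapClusterPt_of_tendsto hclust
    ((continuousOn_of_norm_sub_le_mul hLip).continuousAt (hC.mem_nhds (hSC hxstar))) hgx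

/-- Stationarity consequence of Theorem 1: every cluster point of the sequence
generated by the nonmonotone Armijo-type line search is a first-order
stationary point of `f`. -/
theorem nmls_cluster_points_stationary (n : ℕ) (hn : 1 ≤ n)
    (f : EuclideanSpace ℝ (Fin n) → ℝ)
    (g : EuclideanSpace ℝ (Fin n) → EuclideanSpace ℝ (Fin n))
    (hf : ContDiff ℝ 1 f) (hg : ∀ y, HasGradientAt f (g y) y)
    (s ρ σ : ℝ) (hs : s ∈ Set.Ioc (0 : ℝ) 1) (hρ : ρ ∈ Set.Ioo (0 : ℝ) 1)
    (hσ : σ ∈ Set.Ioo (0 : ℝ) (1 / 2))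
    (N : ℕ) (hN : 1 ≤ N) (η : ℕ → ℝ) (hη : ∀ k, η k ∈ Set.Ico (0 : ℝ) 1)
    (x d : ℕ → EuclideanSpace ℝ (Fin n)) (α : ℕ → ℝ) (jk : ℕ → ℕ)
    (Tbar T fl : ℕ → ℝ)
    (hfl : ∀ k, fl k = (Finset.range (min k N + 1)).sup'
      Finset.nonempty_range_add_one (fun j => f (x (k - j))))
    (hT0 : Tbar 0 = f (x 0))
    (hTrec : ∀ k, 1 ≤ k → k ≤ N - 1 →
      Tbar k = (1 - η (k - 1)) * f (x k) + η (k - 1) * Tbar (k - 1))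
    (hTsum : ∀ k, N ≤ k → Tbar k =
      (∑ j ∈ Finset.range N,
          (∏ i ∈ Finset.range j, η (k - 1 - i)) * (1 - η (k - j - 1)) * f (x (k - j)))
        + (∏ i ∈ Finset.range N, η (k - 1 - i)) * f (x (k - N)))
    (hTlt : ∀ k, k ≤ N - 1 → T k = fl k)
    (hTge : ∀ k, N ≤ k → T k = max (Tbar k) (f (x k)))
    (hjk : ∀ k, IsLeast {j : ℕ | f (x k + (s * ρ ^ j) • d k) ≤
      T k + σ * (s * ρ ^ j) * (inner ℝ (g (x k)) (d k) : ℝ)} (jk k))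
    (hα : ∀ k, α k = s * ρ ^ (jk k))
    (hx : ∀ k, x (k + 1) = x k + α k • d k)
    (H1 : Bornology.IsBounded {y : EuclideanSpace ℝ (Fin n) | f y ≤ f (x 0)})
    (H2 : ∃ C : Set (EuclideanSpace ℝ (Fin n)), IsOpen C ∧ Convex ℝ C ∧
      {y : EuclideanSpace ℝ (Fin n) | f y ≤ f (x 0)} ⊆ C ∧
      ∃ L > (0 : ℝ), ∀ a ∈ C, ∀ b ∈ C, ‖g a - g b‖ ≤ L * ‖a - b‖)
    (H3 : ∃ c₁ c₂ : ℝ, 0 < c₁ ∧ c₁ < 1 ∧ 1 < c₂ ∧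
      ∀ k, (inner ℝ (g (x k)) (d k) : ℝ) ≤ -c₁ * ‖g (x k)‖ ^ 2 ∧
        ‖d k‖ ≤ c₂ * ‖g (x k)‖) :
    ∀ xstar : EuclideanSpace ℝ (Fin n),
      MapClusterPt xstar Filter.atTop x → g xstar = 0 :=
  nmls_cluster_points_stationary_general n f g hg s ρ σ hs hρ hσ N η hη x d α jk Tbar T fl hfl hTsum
    hTlt hTge hjk hα hx H1 H2 H3
end
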